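/- Suppose (W⁺, W⁻) is feasible for min F(W⁺−W⁻) s.t. h(W⁺+W⁻) ≤ 0, W⁺,W⁻ ≥ 0, with A = W⁺+W⁻. Then for every pair (i,j) with (∇h(A))_{ij} > 0, both W⁺_{ij} = 0 and W⁻_{ij} = 0. -/
import Mathlib


open Matrix

/-- `h(A) = Σ_{p=1}^d c_p tr(A^p)`. -/
noncomputable def hsum {d : ℕ} (c : ℕ → ℝ) (A : Matrix (Fin d) (Fin d) ℝ) : ℝ :=
  ∑ p ∈ Finset.Icc 1 d, c p * (A ^ p).trace

/-- The gradient `∇h(A) = Σ_{p=1}^d p c_p (A^{p-1})ᵀ`. -/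
noncomputable def gradh {d : ℕ} (c : ℕ → ℝ) (A : Matrix (Fin d) (Fin d) ℝ) :
    Matrix (Fin d) (Fin d) ℝ :=
  ∑ p ∈ Finset.Icc 1 d, ((p : ℝ) * c p) • (A ^ (p - 1))ᵀ

lemma pow_entry_nonneg {d : ℕ} {A : Matrix (Fin d) (Fin d) ℝ}
    (hA : ∀ i j, 0 ≤ A i j) (n : ℕ) : ∀ i j, 0 ≤ (A ^ n) i j := by
  induction n with
  | zero =>
    intro i j
    rw [pow_zero]
    by_cases h : i = j <;> simp [Matrix.one_apply, h]
  | succ n ih =>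
    intro i j
    rw [pow_succ, Matrix.mul_apply]
    exact Finset.sum_nonneg fun k _ => mul_nonneg (ih i k) (hA k j)

theorem stmt17 {d : ℕ} (c : ℕ → ℝ) (hc : ∀ p ∈ Finset.Icc 1 d, 0 < c p)
    (Wp Wm : Matrix (Fin d) (Fin d) ℝ)
    (hWp : ∀ i j, 0 ≤ Wp i j) (hWm : ∀ i j, 0 ≤ Wm i j)
    (hfeas : hsum c (Wp + Wm) ≤ 0) :
    ∀ i j, 0 < gradh c (Wp + Wm) i j → Wp i j = 0 ∧ Wm i j = 0 := by
  intro i j hg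
  set A := Wp + Wm with hAdef
  have hA : ∀ i j, 0 ≤ A i j := fun i j => add_nonneg (hWp i j) (hWm i j)
  have hpow := pow_entry_nonneg hA
  -- each term of hsum is nonneg
  have hterm : ∀ p ∈ Finset.Icc 1 d, 0 ≤ c p * (A ^ p).trace := fun p hp =>
    mul_nonneg (hc p hp).le (Finset.sum_nonneg fun k _ => hpow p k k)
  have hsum0 : ∑ p ∈ Finset.Icc 1 d, c p * (A ^ p).trace = 0 :=
    le_antisymm hfeas (Finset.sum_nonneg hterm)
  have hdiag0 : ∀ p ∈ Finset.Icc 1 d, ∀ k, (A ^ p) k k = 0 := by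
    intro p hp k
    have h1 : c p * (A ^ p).trace = 0 :=
      (Finset.sum_eq_zero_iff_of_nonneg hterm).mp hsum0 p hp
    have htr : (A ^ p).trace = 0 := by
      rcases mul_eq_zero.mp h1 with h | h
      · exact absurd h (hc p hp).ne'
      · exact h
    have : ∑ k, (A ^ p) k k = 0 := htr
    exact (Finset.sum_eq_zero_iff_of_nonneg fun k _ => hpow p k k).mp this k
      (Finset.mem_univ k)
  have key : A i j = 0 := by
    by_contra hne
    have hpos : 0 < A i j := (hA i j).lt_of_ne (Ne.symm hne)
    have hz : ∀ p ∈ Finset.Icc 1 d, (A ^ (p - 1)) j i = 0 := by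
      intro p hp
      have hp1 : p = 1 + (p - 1) := by
        have := (Finset.mem_Icc.mp hp).1; omega
      have hAp : A ^ p = A * A ^ (p - 1) := by
        conv_lhs => rw [hp1]
        rw [pow_add, pow_one]
      have hle : A i j * (A ^ (p - 1)) j i ≤ (A ^ p) i i := by
        rw [hAp, Matrix.mul_apply]
        exact Finset.single_le_sum
          (f := fun k => A i k * (A ^ (p - 1)) k i)
          (fun k _ => mul_nonneg (hA i k) (hpow (p - 1) k i)) (Finset.mem_univ j)
      have h0 : A i j * (A ^ (p - 1)) j i = 0 :=
        le_antisymm (by rw [hdiag0 p hp i] at hle; exact hle)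
          (mul_nonneg (hA i j) (hpow (p - 1) j i))
      rcases mul_eq_zero.mp h0 with h | h
      · exact absurd h hpos.ne'
      · exact h
    have : gradh c A i j = 0 := by
      unfold gradh
      rw [Matrix.sum_apply]
      refine Finset.sum_eq_zero fun p hp => ?_
      rw [Matrix.smul_apply, Matrix.transpose_apply, hz p hp, smul_zero]
    rw [this] at hg
    exact lt_irrefl 0 hg
  have hWpij : Wp i j + Wm i j = 0 := key
  constructor
  · linarith [hWp i j, hWm i j]
  · linarith [hWp i j, hWm i j]
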